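/- arXiv:1604.05060 — 2 statements merged into one kernel-verified Lean document; each statement's English description precedes it below -/
import Mathlib

section
/- Let p, q be unit quaternions and let Z = (U,V) and Z' = (U',V') be tangent vectors to S³×S³ at (p,q). Then ⟨Z, Q(Z')⟩ = (√3/2)·g(Z, P(J(Z'))), where ⟨Z,W⟩ denotes the Euclidean product inner product (sum of the componentwise quaternionic Euclidean inner products) and Q(U,V) = (−U, V). -/
open Quaternion

noncomputable section

/-- Euclidean inner product on ℍ ≅ ℝ⁴: ⟨a,b⟩ = Re(a · conj b). -/
def innQ (a b : ℍ[ℝ]) : ℝ := (a * star b).re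

/-- Euclidean product inner product on ℍ × ℍ. -/
def innP (Z Z' : ℍ[ℝ] × ℍ[ℝ]) : ℝ := innQ Z.1 Z'.1 + innQ Z.2 Z'.2

/-- Tangency to S³ × S³ at (p,q). -/
def Tangent (p q : ℍ[ℝ]) (Z : ℍ[ℝ] × ℍ[ℝ]) : Prop :=
  (p⁻¹ * Z.1).re = 0 ∧ (q⁻¹ * Z.2).re = 0

/-- The almost complex structure J of the nearly Kähler S³×S³ at the point (p,q). -/
def Jmap (p q : ℍ[ℝ]) (Z : ℍ[ℝ] × ℍ[ℝ]) : ℍ[ℝ] × ℍ[ℝ] :=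
  (Real.sqrt 3)⁻¹ •
    ((2 * (p * q⁻¹ * Z.2) - Z.1, -(2 * (q * p⁻¹ * Z.1)) + Z.2) : ℍ[ℝ] × ℍ[ℝ])

/-- The nearly Kähler metric g at the point (p,q). -/
def gmet (p q : ℍ[ℝ]) (Z Z' : ℍ[ℝ] × ℍ[ℝ]) : ℝ :=
  (4/3) * (innQ Z.1 Z'.1 + innQ Z.2 Z'.2)
    - (2/3) * (innQ (p⁻¹ * Z.1) (q⁻¹ * Z'.2) + innQ (p⁻¹ * Z'.1) (q⁻¹ * Z.2))

/-- The almost product structure P at the point (p,q). -/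
def Pmap (p q : ℍ[ℝ]) (Z : ℍ[ℝ] × ℍ[ℝ]) : ℍ[ℝ] × ℍ[ℝ] :=
  (p * q⁻¹ * Z.2, q * p⁻¹ * Z.1)

/-- The usual product structure Q. -/
def Qmap (Z : ℍ[ℝ] × ℍ[ℝ]) : ℍ[ℝ] × ℍ[ℝ] := (-Z.1, Z.2)

/-- The quaternion units i, j, k. -/
def qi : ℍ[ℝ] := ⟨0, 1, 0, 0⟩
def qj : ℍ[ℝ] := ⟨0, 0, 1, 0⟩
def qk : ℍ[ℝ] := ⟨0, 0, 0, 1⟩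

/-!
Put `a = p q⁻¹`, so that `P (U, V) = (a V, a⁻¹ U)` is an involution and
`J Z = (1/√3) Q (Z - 2 P Z)`, whence `P J Z = (1/√3) (2 Q Z - Q P Z)`.
For unit `p, q`, left multiplication by `p⁻¹ = p*` is adjoint to left multiplication
by `p`, which turns the metric into `g(Z, W) = 4/3 ⟨Z, W⟩ - 2/3 ⟨Z, P W⟩`. Therefore
`g(Z, P J Z') = 4/3 ⟨Z, P J Z'⟩ - 2/3 ⟨Z, J Z'⟩`, in which the `⟨Z, Q P Z'⟩` terms
cancel and `(2/√3) ⟨Z, Q Z'⟩` remains.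
-/

open scoped RealInnerProductSpace

namespace Quaternion

theorem re_mul_comm (a b : ℍ[ℝ]) : (a * b).re = (b * a).re := by
  simp only [re_mul]; ring

theorem inner_mul_left_eq_inner_star_mul (c x y : ℍ[ℝ]) :
    ⟪c * x, y⟫ = ⟪x, star c * y⟫ := by
  rw [inner_def, inner_def, star_mul, star_star, mul_assoc, re_mul_comm c, mul_assoc]

theorem inv_eq_star_of_norm_eq_one {p : ℍ[ℝ]} (hp : ‖p‖ = 1) : p⁻¹ = star p := by
  refine inv_eq_of_mul_eq_one_left ?_
  rw [star_mul_self, normSq_eq_norm_mul_self, hp, mul_one, coe_one]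

theorem inner_inv_mul_of_norm_eq_one {p : ℍ[ℝ]} (hp : ‖p‖ = 1) (x y : ℍ[ℝ]) :
    ⟪p⁻¹ * x, y⟫ = ⟪x, p * y⟫ := by
  rw [inner_mul_left_eq_inner_star_mul, inv_eq_star_of_norm_eq_one hp, star_star]

end Quaternion

theorem innQ_eq_inner (a b : ℍ[ℝ]) : innQ a b = ⟪a, b⟫ := (inner_def a b).symm

theorem innP_sub_right (Z W W' : ℍ[ℝ] × ℍ[ℝ]) :
    innP Z (W - W') = innP Z W - innP Z W' := by
  simp only [innP, innQ_eq_inner, Prod.fst_sub, Prod.snd_sub, inner_sub_right]; ring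

theorem innP_smul_right (r : ℝ) (Z W : ℍ[ℝ] × ℍ[ℝ]) :
    innP Z (r • W) = r * innP Z W := by
  simp only [innP, innQ_eq_inner, Prod.smul_fst, Prod.smul_snd, inner_smul_right]; ring

theorem Pmap_Pmap {p q : ℍ[ℝ]} (hp : p ≠ 0) (hq : q ≠ 0) (Z : ℍ[ℝ] × ℍ[ℝ]) :
    Pmap p q (Pmap p q Z) = Z := by
  refine Prod.ext ?_ ?_ <;> simp [Pmap, mul_assoc, hp, hq]

theorem Jmap_eq (p q : ℍ[ℝ]) (Z : ℍ[ℝ] × ℍ[ℝ]) :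
    Jmap p q Z = (Real.sqrt 3)⁻¹ • (Qmap Z - (2 : ℝ) • Qmap (Pmap p q Z)) := by
  refine Prod.ext ?_ ?_ <;> simp [Jmap, Qmap, Pmap, two_mul, two_smul, smul_sub, smul_add] <;>
    abel

theorem Pmap_Jmap {p q : ℍ[ℝ]} (hp : p ≠ 0) (hq : q ≠ 0) (Z : ℍ[ℝ] × ℍ[ℝ]) :
    Pmap p q (Jmap p q Z) = (Real.sqrt 3)⁻¹ • ((2 : ℝ) • Qmap Z - Qmap (Pmap p q Z)) := by
  refine Prod.ext ?_ ?_ <;>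
    simp [Jmap, Qmap, Pmap, mul_add, mul_sub, mul_assoc, two_mul, two_smul, smul_sub, smul_add,
      hp, hq]

theorem gmet_eq {p q : ℍ[ℝ]} (hp : ‖p‖ = 1) (hq : ‖q‖ = 1) (Z W : ℍ[ℝ] × ℍ[ℝ]) :
    gmet p q Z W = 4 / 3 * innP Z W - 2 / 3 * innP Z (Pmap p q W) := by
  simp only [gmet, innP, Pmap, innQ_eq_inner, mul_assoc]
  rw [inner_inv_mul_of_norm_eq_one hp, real_inner_comm (q⁻¹ * Z.2),
    inner_inv_mul_of_norm_eq_one hq]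

theorem gmet_Pmap {p q : ℍ[ℝ]} (hp : ‖p‖ = 1) (hq : ‖q‖ = 1) (Z W : ℍ[ℝ] × ℍ[ℝ]) :
    gmet p q Z (Pmap p q W) = 4 / 3 * innP Z (Pmap p q W) - 2 / 3 * innP Z W := by
  rw [gmet_eq hp hq, Pmap_Pmap (ne_zero_of_norm_ne_zero (by simp [hp]))
    (ne_zero_of_norm_ne_zero (by simp [hq]))]

theorem stmt_11_general (p q : ℍ[ℝ]) (hp : ‖p‖ = 1) (hq : ‖q‖ = 1)
    (Z Z' : ℍ[ℝ] × ℍ[ℝ]) :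
    innP Z (Qmap Z') = (Real.sqrt 3 / 2) * gmet p q Z (Pmap p q (Jmap p q Z')) := by
  have hp₀ : p ≠ 0 := ne_zero_of_norm_ne_zero (by simp [hp])
  have hq₀ : q ≠ 0 := ne_zero_of_norm_ne_zero (by simp [hq])
  rw [gmet_Pmap hp hq, Pmap_Jmap hp₀ hq₀, Jmap_eq]
  simp only [innP_smul_right, innP_sub_right]
  field_simp
  ring

/-- ⟨Z, QZ'⟩ = (√3/2) g(Z, PJZ'). -/
theorem stmt_11 (p q : ℍ[ℝ]) (hp : ‖p‖ = 1) (hq : ‖q‖ = 1)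
    (Z Z' : ℍ[ℝ] × ℍ[ℝ]) (hZ : Tangent p q Z) (hZ' : Tangent p q Z') :
    innP Z (Qmap Z') = (Real.sqrt 3 / 2) * gmet p q Z (Pmap p q (Jmap p q Z')) :=
  stmt_11_general p q hp hq Z Z'
end
end

section
/- Let u be a unit quaternion and let i, j, k denote the imaginary quaternionic units. At the point (p,q) = (u·i·u⁻¹, u·j·u⁻¹) ∈ S³×S³, consider the tangent vectors T₁ = (0, 2u·k·u⁻¹), T₂ = (−2u·k·u⁻¹, 0), and T₃ = (−2u·j·u⁻¹, 2u·i·u⁻¹) spanning the tangent space to the Lagrangian immersion f(u) = (u·i·u⁻¹, u·j·u⁻¹). Then the almost product structure P satisfies P(T₁) = −(1/2)·(T₁ − √3·J(T₁)), P(T₂) = −(1/2)·(T₂ + √3·J(T₂)), and P(T₃) = T₃; that is, the angle functions of this Lagrangian immersion are (2θ₁, 2θ₂, 2θ₃) = (2π/3, 4π/3, 0), and hence this immersion is not totally geodesic. Here J and P are evaluated at the point (u·i·u⁻¹, u·j·u⁻¹). -/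
open Quaternion

noncomputable section

/-!
Conjugation by `u` is an `ℝ`-algebra automorphism `φ` of `ℍ`, and `φ × φ` intertwines `P` and `J`
at `(p, q)` with `P` and `J` at `(φ p, φ q)`. Since the point and the frame are the images under
`φ` of the point `(i, j)` and the frame `(0, 2k), (-2k, 0), (-2j, 2i)`, everything reduces to
`u = 1`, where it is a computation with the multiplication table of `i, j, k`.
-/

theorem sqrt_three_smul_Jmap (p q : ℍ[ℝ]) (Z : ℍ[ℝ] × ℍ[ℝ]) :
    √3 • Jmap p q Z = (2 * (p * q⁻¹ * Z.2) - Z.1, -(2 * (q * p⁻¹ * Z.1)) + Z.2) := by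
  rw [Jmap, smul_inv_smul₀ (by positivity)]

@[simp] theorem qi_mul_qi : qi * qi = -1 := by
  ext <;> simp [re_mul, imI_mul, imJ_mul, imK_mul] <;> simp [qi]
@[simp] theorem qj_mul_qj : qj * qj = -1 := by
  ext <;> simp [re_mul, imI_mul, imJ_mul, imK_mul] <;> simp [qj]
@[simp] theorem qk_mul_qk : qk * qk = -1 := by
  ext <;> simp [re_mul, imI_mul, imJ_mul, imK_mul] <;> simp [qk]
@[simp] theorem qi_mul_qj : qi * qj = qk := by
  ext <;> simp [re_mul, imI_mul, imJ_mul, imK_mul] <;> simp [qi, qj, qk]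
@[simp] theorem qj_mul_qi : qj * qi = -qk := by
  ext <;> simp [re_mul, imI_mul, imJ_mul, imK_mul] <;> simp [qi, qj, qk]
@[simp] theorem qk_mul_qi : qk * qi = qj := by
  ext <;> simp [re_mul, imI_mul, imJ_mul, imK_mul] <;> simp [qi, qj, qk]
@[simp] theorem qk_mul_qj : qk * qj = -qi := by
  ext <;> simp [re_mul, imI_mul, imJ_mul, imK_mul] <;> simp [qi, qj, qk]

theorem inv_eq_neg_of_mul_self_eq_neg_one {R : Type*} [DivisionRing R] {x : R}
    (h : x * x = -1) : x⁻¹ = -x :=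
  inv_eq_of_mul_eq_one_right (by rw [mul_neg, h, neg_neg])

@[simp] theorem qi_inv : qi⁻¹ = -qi := inv_eq_neg_of_mul_self_eq_neg_one qi_mul_qi
@[simp] theorem qj_inv : qj⁻¹ = -qj := inv_eq_neg_of_mul_self_eq_neg_one qj_mul_qj

theorem Pmap_Jmap_frame_at_qi_qj :
    Pmap qi qj (0, 2 * qk) = -((1/2 : ℝ) • ((0, 2 * qk) - √3 • Jmap qi qj (0, 2 * qk))) ∧
    Pmap qi qj (-(2 * qk), 0) =
      -((1/2 : ℝ) • ((-(2 * qk), 0) + √3 • Jmap qi qj (-(2 * qk), 0))) ∧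
    Pmap qi qj (-(2 * qj), 2 * qi) = (-(2 * qj), 2 * qi) := by
  simp only [sqrt_three_smul_Jmap, Pmap]
  refine ⟨?_, ?_, ?_⟩ <;> ext1 <;> simp [two_mul, mul_add] <;> norm_num <;> module

section AlgHom

variable (φ : ℍ[ℝ] →ₐ[ℝ] ℍ[ℝ]) (p q : ℍ[ℝ]) (Z : ℍ[ℝ] × ℍ[ℝ])

theorem Pmap_prodMap :
    Pmap (φ p) (φ q) (φ.toLinearMap.prodMap φ.toLinearMap Z) =
      φ.toLinearMap.prodMap φ.toLinearMap (Pmap p q Z) := by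
  simp [Pmap]

theorem Jmap_prodMap :
    Jmap (φ p) (φ q) (φ.toLinearMap.prodMap φ.toLinearMap Z) =
      φ.toLinearMap.prodMap φ.toLinearMap (Jmap p q Z) := by
  simp [Jmap, map_ofNat]

end AlgHom

/-- for the Lagrangian immersion u ↦ (uiu⁻¹, uju⁻¹), the almost
product structure acts on the tangent frame T₁, T₂, T₃ with angle functions
(2θ₁, 2θ₂, 2θ₃) = (2π/3, 4π/3, 0). -/
theorem stmt_18 (u : ℍ[ℝ]) (hu : ‖u‖ = 1)
    (T₁ T₂ T₃ : ℍ[ℝ] × ℍ[ℝ])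
    (hT1 : T₁ = (0, 2 * (u * qk * u⁻¹)))
    (hT2 : T₂ = (-(2 * (u * qk * u⁻¹)), 0))
    (hT3 : T₃ = (-(2 * (u * qj * u⁻¹)), 2 * (u * qi * u⁻¹))) :
    Pmap (u * qi * u⁻¹) (u * qj * u⁻¹) T₁
      = -((1/2 : ℝ) • (T₁ - Real.sqrt 3 • Jmap (u * qi * u⁻¹) (u * qj * u⁻¹) T₁)) ∧
    Pmap (u * qi * u⁻¹) (u * qj * u⁻¹) T₂
      = -((1/2 : ℝ) • (T₂ + Real.sqrt 3 • Jmap (u * qi * u⁻¹) (u * qj * u⁻¹) T₂)) ∧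
    Pmap (u * qi * u⁻¹) (u * qj * u⁻¹) T₃ = T₃ := by
  have hu0 : u ≠ 0 := norm_ne_zero_iff.mp (hu ▸ one_ne_zero)
  set φ := (MulSemiringAction.toAlgEquiv ℝ ℍ[ℝ] (ConjAct.toConjAct (Units.mk0 u hu0))).toAlgHom
  have hφ (x : ℍ[ℝ]) : u * x * u⁻¹ = φ x := by simp [φ, ConjAct.units_smul_def]
  set Φ := φ.toLinearMap.prodMap φ.toLinearMap
  have hT₁ : T₁ = Φ (0, 2 * qk) := by simp [Φ, hT1, hφ, map_ofNat]
  have hT₂ : T₂ = Φ (-(2 * qk), 0) := by simp [Φ, hT2, hφ, map_ofNat]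
  have hT₃ : T₃ = Φ (-(2 * qj), 2 * qi) := by simp [Φ, hT3, hφ, map_ofNat]
  obtain ⟨h₁, h₂, h₃⟩ := Pmap_Jmap_frame_at_qi_qj
  simp only [hφ, hT₁, hT₂, hT₃, Φ, Pmap_prodMap, Jmap_prodMap, ← map_smul, ← map_sub,
    ← map_add, ← map_neg]
  exact ⟨congrArg Φ h₁, congrArg Φ h₂, congrArg Φ h₃⟩
end
end
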